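/- arXiv:2512.16105 — 4 statements merged into one kernel-verified Lean document; each statement's English description precedes it below -/
import Mathlib

section
/- Let H be a real Hilbert space, φ : ℕ → H a feature map with ‖φ i‖ ≤ C for all i and some constant C > 0, and define the kernel k(i,j) = ⟪φ i, φ j⟫. Let p : ℕ → ℝ be nonnegative with ∑_{i=0}^∞ p(i) = 1, let g ∈ H, and define f : ℕ → ℝ by f(i) = ⟪g, φ i⟫. Fix N ∈ ℕ and suppose the Gram matrix K ∈ ℝ^{N×N} with entries K_{ij} = k(i,j) for 0 ≤ i,j < N is invertible. Define the kernel-mean vector μ_N ∈ ℝ^N by (μ_N)_j = ∑_{i=0}^∞ p(i) k(i,j) (each series converges absolutely), and the BayesSum estimate Î = μ_N^⊤ K^{−1} f_N where f_N = (f(0),…,f(N−1))^⊤. Then |∑_{i=0}^∞ p(i) f(i) − Î| ≤ C ‖g‖ (1 − ∑_{i=0}^{N−1} p(i)). -/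
/-!
Write `m = ∑' i, p i • φ i` for the kernel mean embedding of `p`, so that
`∑' i, p i * f i = ⟪g, m⟫`. The weights `μ_N^⊤ K⁻¹` are the coefficients of the orthogonal
projection `Pm` of `m` onto the span of `φ 0, …, φ (N - 1)`, so `Î = ⟪g, Pm⟫` and the error is
`⟪g, m - Pm⟫`. The projection is the best approximation from that span, in particular no worse
than the truncation `∑_{i<N} p i • φ i`, whose distance to `m` is at most `C` times the tail mass
`1 - ∑_{i<N} p i`.
-/

open Matrix Finset
open scoped RealInnerProductSpace

section InnerProductSpace

variable {E : Type*} [NormedAddCommGroup E] [InnerProductSpace ℝ E]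

theorem norm_le_norm_add_of_real_inner_eq_zero {x y : E} (h : ⟪x, y⟫ = 0) : ‖x‖ ≤ ‖x + y‖ := by
  rw [mul_self_le_mul_self_iff (norm_nonneg _) (norm_nonneg _),
    norm_add_sq_eq_norm_sq_add_norm_sq_real h]
  exact le_add_of_nonneg_right (mul_self_nonneg _)

theorem HasSum.real_inner_right {ι : Type*} {v : ι → E} {m : E} (h : HasSum v m) (y : E) :
    HasSum (fun i => ⟪y, v i⟫) ⟪y, m⟫ :=
  h.mapL (innerSL ℝ y)

variable {ι : Type*} [Fintype ι] [DecidableEq ι] {v : ι → E}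

theorem real_inner_sum_vecMul_inv_gram_smul (hv : IsUnit (gram ℝ v).det) (a : ι → ℝ) (j : ι) :
    ⟪v j, ∑ k, (a ᵥ* (gram ℝ v)⁻¹) k • v k⟫ = a j := by
  have hvecMul : (a ᵥ* (gram ℝ v)⁻¹) ᵥ* gram ℝ v = a := by
    rw [vecMul_vecMul, nonsing_inv_mul _ hv, vecMul_one]
  conv_rhs => rw [← hvecMul]
  simp only [inner_sum, real_inner_smul_right, vecMul, dotProduct, gram_apply, real_inner_comm]

theorem norm_sub_sum_vecMul_inv_gram_smul_le (hv : IsUnit (gram ℝ v).det) (x : E) (c : ι → ℝ) :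
    ‖x - ∑ k, ((fun j => ⟪v j, x⟫) ᵥ* (gram ℝ v)⁻¹) k • v k‖ ≤ ‖x - ∑ k, c k • v k‖ := by
  set w := (fun j => ⟪v j, x⟫) ᵥ* (gram ℝ v)⁻¹
  have horth : ∀ k, ⟪x - ∑ k, w k • v k, v k⟫ = 0 := fun k => by
    rw [inner_sub_left, real_inner_comm, real_inner_comm (v k),
      real_inner_sum_vecMul_inv_gram_smul hv, sub_self]
  have hdiff : ∑ k, w k • v k - ∑ k, c k • v k = ∑ k, (w k - c k) • v k := by
    simp only [sub_smul, sum_sub_distrib]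
  calc ‖x - ∑ k, w k • v k‖
      ≤ ‖(x - ∑ k, w k • v k) + (∑ k, w k • v k - ∑ k, c k • v k)‖ := by
        refine norm_le_norm_add_of_real_inner_eq_zero ?_
        simp only [hdiff, inner_sum, real_inner_smul_right, horth, mul_zero, sum_const_zero]
    _ = ‖x - ∑ k, c k • v k‖ := by rw [sub_add_sub_cancel]

end InnerProductSpace

section WeightedSeries

variable {E : Type*} [NormedAddCommGroup E] [NormedSpace ℝ E] {C : ℝ}

theorem norm_smul_le_mul_of_nonneg_of_norm_le {a : ℝ} {x : E} (ha : 0 ≤ a) (hx : ‖x‖ ≤ C) :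
    ‖a • x‖ ≤ C * a := by
  rw [norm_smul, Real.norm_of_nonneg ha, mul_comm]
  exact mul_le_mul_of_nonneg_right hx ha

theorem summable_smul_of_norm_le [CompleteSpace E] {ι : Type*} {p : ι → ℝ} {v : ι → E}
    (hp : ∀ i, 0 ≤ p i) (hps : Summable p) (hv : ∀ i, ‖v i‖ ≤ C) : Summable fun i => p i • v i :=
  .of_norm_bounded (hps.mul_left C) fun i => norm_smul_le_mul_of_nonneg_of_norm_le (hp i) (hv i)

theorem norm_sub_sum_range_smul_le {p : ℕ → ℝ} {v : ℕ → E} {a : ℝ} {m : E}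
    (hp : ∀ i, 0 ≤ p i) (hpa : HasSum p a) (hv : ∀ i, ‖v i‖ ≤ C)
    (hm : HasSum (fun i => p i • v i) m) (N : ℕ) :
    ‖m - ∑ i ∈ range N, p i • v i‖ ≤ C * (a - ∑ i ∈ range N, p i) :=
  ((hasSum_nat_add_iff' N).2 hm).norm_le_of_bounded (((hasSum_nat_add_iff' N).2 hpa).mul_left C)
    fun _ => norm_smul_le_mul_of_nonneg_of_norm_le (hp _) (hv _)

end WeightedSeries

theorem stmt0_general {H : Type*} [NormedAddCommGroup H] [InnerProductSpace ℝ H] [CompleteSpace H]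
    (φ : ℕ → H) (C : ℝ) (hφ : ∀ i, ‖φ i‖ ≤ C)
    (p : ℕ → ℝ) (hp : ∀ i, 0 ≤ p i) (hp1 : HasSum p 1)
    (g : H) (f : ℕ → ℝ) (hf : ∀ i, f i = ⟪g, φ i⟫)
    (N : ℕ) (K : Matrix (Fin N) (Fin N) ℝ)
    (hK : ∀ i j : Fin N, K i j = ⟪φ (i : ℕ), φ (j : ℕ)⟫)
    (hKinv : IsUnit K.det)
    (μ : Fin N → ℝ) (hμ : ∀ j : Fin N, μ j = ∑' i : ℕ, p i * ⟪φ i, φ (j : ℕ)⟫)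
    (Ihat : ℝ) (hI : Ihat = μ ⬝ᵥ (K⁻¹ *ᵥ fun j : Fin N => f (j : ℕ))) :
    |(∑' i : ℕ, p i * f i) - Ihat| ≤ C * ‖g‖ * (1 - ∑ i ∈ Finset.range N, p i) := by
  set v : Fin N → H := fun j => φ j
  have hKgram : K = gram ℝ v := Matrix.ext hK
  obtain ⟨m, hm⟩ := summable_smul_of_norm_le hp hp1.summable hφ
  have hμm : μ = fun j => ⟪v j, m⟫ := funext fun j => by
    rw [hμ j, ← (hm.real_inner_right _).tsum_eq]
    exact tsum_congr fun i => by rw [real_inner_smul_right, real_inner_comm]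
  have hmean : ∑' i, p i * f i = ⟪g, m⟫ := by
    rw [← (hm.real_inner_right g).tsum_eq]
    exact tsum_congr fun i => by rw [real_inner_smul_right, hf]
  have hIhat : Ihat = ⟪g, ∑ k, (μ ᵥ* K⁻¹) k • v k⟫ := by
    rw [hI, dotProduct_mulVec]
    simp only [dotProduct, inner_sum, real_inner_smul_right, hf, v]
  have htrunc : ∑ k : Fin N, p k • v k = ∑ i ∈ range N, p i • φ i :=
    Fin.sum_univ_eq_sum_range (fun i => p i • φ i) N
  calc |(∑' i, p i * f i) - Ihat| = |⟪g, m - ∑ k, (μ ᵥ* K⁻¹) k • v k⟫| := by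
        rw [hmean, hIhat, inner_sub_right]
    _ ≤ ‖g‖ * ‖m - ∑ k, (μ ᵥ* K⁻¹) k • v k‖ := abs_real_inner_le_norm _ _
    _ ≤ ‖g‖ * ‖m - ∑ k : Fin N, p k • v k‖ := by
        gcongr
        rw [hμm, hKgram]
        exact norm_sub_sum_vecMul_inv_gram_smul_le (hKgram ▸ hKinv) m _
    _ ≤ ‖g‖ * (C * (1 - ∑ i ∈ range N, p i)) := by
        gcongr
        rw [htrunc]
        exact norm_sub_sum_range_smul_le hp hp1 hφ hm N
    _ = C * ‖g‖ * (1 - ∑ i ∈ range N, p i) := by ring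

/-- BayesSum error bound (Theorem 1): for `f` in the RKHS of `k(i,j) = ⟪φ i, φ j⟫`,
the BayesSum estimate `Î = μ_N^⊤ K⁻¹ f_N` satisfies
`|∑ p(i) f(i) − Î| ≤ C ‖g‖ (1 − ∑_{i<N} p(i))`. -/
theorem stmt0 {H : Type*} [NormedAddCommGroup H] [InnerProductSpace ℝ H] [CompleteSpace H]
    (φ : ℕ → H) (C : ℝ) (hC : 0 < C) (hφ : ∀ i, ‖φ i‖ ≤ C)
    (p : ℕ → ℝ) (hp : ∀ i, 0 ≤ p i) (hp1 : HasSum p 1)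
    (g : H) (f : ℕ → ℝ) (hf : ∀ i, f i = ⟪g, φ i⟫)
    (N : ℕ) (K : Matrix (Fin N) (Fin N) ℝ)
    (hK : ∀ i j : Fin N, K i j = ⟪φ (i : ℕ), φ (j : ℕ)⟫)
    (hKinv : IsUnit K.det)
    (μ : Fin N → ℝ) (hμ : ∀ j : Fin N, μ j = ∑' i : ℕ, p i * ⟪φ i, φ (j : ℕ)⟫)
    (Ihat : ℝ) (hI : Ihat = μ ⬝ᵥ (K⁻¹ *ᵥ fun j : Fin N => f (j : ℕ))) :
    |(∑' i : ℕ, p i * f i) - Ihat| ≤ C * ‖g‖ * (1 - ∑ i ∈ Finset.range N, p i) :=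
  stmt0_general φ C hφ p hp hp1 g f hf N K hK hKinv μ hμ Ihat hI
end

section
/- Let q ∈ (0,1) and let y be a positive integer. Then ∑_{x=1}^∞ min(x,y) · (−1/log(1−q)) · q^x / x = y + (1/log(1−q)) · ∑_{n=1}^{y−1} (y−n) q^n / n, where the left-hand series converges absolutely. -/
/-- Kernel mean embedding of the Brownian motion kernel under the logarithmic
distribution Log(q): for a positive integer `y`,
`∑_{x≥1} min(x,y) (−1/log(1−q)) q^x/x = y + (1/log(1−q)) ∑_{n=1}^{y−1} (y−n) q^n/n`. -/
theorem stmt11 (q : ℝ) (hq : q ∈ Set.Ioo (0 : ℝ) 1) (y : ℕ) (hy : 0 < y) :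
    (∑' x : ℕ, (min (x + 1) y : ℝ) *
        (-(1 / Real.log (1 - q)) * q ^ (x + 1) / (x + 1 : ℕ))) =
      (y : ℝ) + (1 / Real.log (1 - q)) *
        ∑ n ∈ Finset.Ico 1 y, ((y : ℝ) - (n : ℝ)) * q ^ n / (n : ℝ) := by
  obtain ⟨hq0, hq1⟩ := hq
  set L := Real.log (1 - q) with hL
  have hLneg : L < 0 := Real.log_neg (by linarith) (by linarith)
  have hLne : L ≠ 0 := ne_of_lt hLneg
  have h1 : HasSum (fun x : ℕ => q ^ (x + 1) / (x + 1)) (-L) := by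
    have := Real.hasSum_pow_div_log_of_abs_lt_one (x := q) (by rw [abs_lt]; constructor <;> linarith)
    simpa using this
  have h2 : HasSum (fun x : ℕ => -(1 / L) * (y : ℝ) * (q ^ (x + 1) / (x + 1)))
      (-(1 / L) * (y : ℝ) * (-L)) := h1.mul_left _
  have hval : -(1 / L) * (y : ℝ) * (-L) = (y : ℝ) := by field_simp
  rw [hval] at h2
  -- finite support part
  set g : ℕ → ℝ := fun x =>
    (if x + 1 < y then ((y : ℝ) - (x + 1 : ℕ)) else 0) * (-(1 / L)) * q ^ (x + 1) / (x + 1)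
    with hg
  have h3 : HasSum g (∑ x ∈ Finset.range (y - 1), g x) := by
    apply hasSum_sum_of_ne_finset_zero
    intro x hx
    simp only [Finset.mem_range, not_lt] at hx
    have : ¬ (x + 1 < y) := by omega
    simp [hg, this]
  have h4 : HasSum (fun x : ℕ => (min (x + 1) y : ℝ) * (-(1 / L) * q ^ (x + 1) / (x + 1 : ℕ)))
      ((y : ℝ) - ∑ x ∈ Finset.range (y - 1), g x) := by
    have := h2.sub h3
    convert this using 2 with x
    · rfl
    by_cases hxy : x + 1 < y
    · have hle : ((x : ℝ) + 1) ≤ (y : ℝ) := by exact_mod_cast Nat.le_of_lt hxy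
      rw [min_eq_left hle]
      simp only [hg, if_pos hxy]
      push_cast
      field_simp
      ring
    · have hle : (y : ℝ) ≤ ((x : ℝ) + 1) := by
        have : y ≤ x + 1 := by omega
        exact_mod_cast this
      rw [min_eq_right hle]
      simp only [hg, if_neg hxy]
      push_cast
      ring
  rw [h4.tsum_eq]
  have hsum : ∑ x ∈ Finset.range (y - 1), g x =
      -(1 / L) * ∑ n ∈ Finset.Ico 1 y, ((y : ℝ) - (n : ℝ)) * q ^ n / (n : ℝ) := by
    rw [Finset.sum_Ico_eq_sum_range]
    rw [Finset.mul_sum]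
    apply Finset.sum_congr rfl
    intro x hx
    simp only [Finset.mem_range] at hx
    have hlt : x + 1 < y := by omega
    simp only [hg, if_pos hlt]
    push_cast
    ring
  rw [hsum]
  ring
end

section
/- Let d ∈ ℕ. Then, with real division (and Lean's convention a/0 = 0, which only affects vanishing terms), ∑_{x ⊆ Fin d} ∑_{y ⊆ Fin d} |x ∩ y| / (|x| + |y| − |x ∩ y|) = ∑_{t=0}^{d} ∑_{s=0}^{d} ∑_{a=0}^{s} (a / (s + t − a)) · C(d, t) · C(t, a) · C(d − t, s − a), where C(n,k) is the binomial coefficient (terms with a > t or s − a > d − t vanish because the binomial coefficients are zero). -/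
open Finset

/-- Decomposition of a sum over all subsets `x ⊆ Fin d` according to
`|x|` and `|x ∩ y|`, for a fixed subset `y`. -/
lemma tanimoto_decomp (d : ℕ) (y : Finset (Fin d)) (f : ℕ → ℕ → ℝ) :
    ∑ x : Finset (Fin d), f x.card (x ∩ y).card
      = ∑ a ∈ range (y.card + 1), ∑ b ∈ range ((d - y.card) + 1),
          (y.card.choose a : ℝ) * ((d - y.card).choose b : ℝ) * f (a + b) a := by
  have hcompl : yᶜ.card = d - y.card := by simp [Finset.card_compl]
  have h1 : ∑ x : Finset (Fin d), f x.card (x ∩ y).card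
      = ∑ p ∈ y.powerset ×ˢ yᶜ.powerset, f (p.1.card + p.2.card) p.1.card := by
    refine Finset.sum_nbij' (fun x => (x ∩ y, x \ y)) (fun p => p.1 ∪ p.2) ?_ ?_ ?_ ?_ ?_
    · intro x _
      simp only [mem_product, mem_powerset]
      refine ⟨inter_subset_right, fun i hi => ?_⟩
      simp only [Finset.mem_sdiff] at hi
      simp [hi.2]
    · intro p _; exact mem_univ _
    · intro x _
      dsimp only
      ext i; simp [Finset.mem_sdiff, Finset.mem_inter]; tauto
    · intro p hp
      simp only [mem_product, mem_powerset] at hp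
      obtain ⟨h1, h2⟩ := hp
      have hv : ∀ i ∈ p.2, i ∉ y := fun i hi => by simpa using h2 hi
      have e1 : (p.1 ∪ p.2) ∩ y = p.1 := by
        ext i
        simp only [Finset.mem_inter, Finset.mem_union]
        constructor
        · rintro ⟨hi | hi, hy⟩
          · exact hi
          · exact absurd hy (hv i hi)
        · exact fun hi => ⟨Or.inl hi, h1 hi⟩
      have e2 : (p.1 ∪ p.2) \ y = p.2 := by
        ext i
        simp only [Finset.mem_sdiff, Finset.mem_union]
        constructor
        · rintro ⟨hi | hi, hy⟩
          · exact absurd (h1 hi) hy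
          · exact hi
        · exact fun hi => ⟨Or.inr hi, hv i hi⟩
      rw [e1, e2]
    · intro x _
      dsimp only
      congr 1
      have := Finset.card_inter_add_card_sdiff x y
      omega
  rw [h1, Finset.sum_product, Finset.sum_powerset]
  refine Finset.sum_congr rfl fun a _ => ?_
  have step1 : ∀ u ∈ powersetCard a y,
      ∑ v ∈ yᶜ.powerset, f (u.card + v.card) u.card
        = ∑ b ∈ range (d - y.card + 1), ((d - y.card).choose b : ℝ) * f (a + b) a := by
    intro u hu
    have hua : u.card = a := (Finset.mem_powersetCard.mp hu).2
    rw [Finset.sum_powerset, hcompl]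
    refine Finset.sum_congr rfl fun b _ => ?_
    have hc : ∀ v ∈ powersetCard b yᶜ, f (u.card + v.card) u.card = f (a + b) a := by
      intro v hv
      rw [hua, (Finset.mem_powersetCard.mp hv).2]
    rw [Finset.sum_congr rfl hc, Finset.sum_const, Finset.card_powersetCard, hcompl,
      nsmul_eq_mul]
  rw [Finset.sum_congr rfl step1, Finset.sum_const, Finset.card_powersetCard, nsmul_eq_mul,
    Finset.mul_sum]
  refine Finset.sum_congr rfl fun b _ => ?_
  ring

/-- Reindexing `(a, b) ↦ (s, a) = (a + b, a)` for the inner double sum. -/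
lemma tanimoto_reindex (d t : ℕ) (ht : t ≤ d) :
    (∑ a ∈ range (t + 1), ∑ b ∈ range (d - t + 1),
      (t.choose a : ℝ) * ((d - t).choose b : ℝ) * ((a : ℝ) / (((a + b : ℕ) : ℝ) + t - a)))
    = ∑ s ∈ range (d + 1), ∑ a ∈ range (s + 1),
        ((a : ℝ) / ((s : ℝ) + (t : ℝ) - (a : ℝ))) * (t.choose a : ℝ)
          * ((d - t).choose (s - a) : ℝ) := by
  rw [Finset.sum_sigma', Finset.sum_sigma']
  refine Finset.sum_bij_ne_zero (fun p _ _ => ⟨p.1 + p.2, p.1⟩) ?_ ?_ ?_ ?_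
  · rintro ⟨a, b⟩ h₁ _
    simp only [Finset.mem_sigma, Finset.mem_range] at h₁ ⊢
    omega
  · rintro ⟨a₁, b₁⟩ h₁₁ h₁₂ ⟨a₂, b₂⟩ h₂₁ h₂₂ h
    have h1 := congrArg Sigma.fst h
    have h2 := congrArg (fun q : Σ _ : ℕ, ℕ => q.2) h
    dsimp only at h1 h2
    have ha : a₁ = a₂ := h2
    have hb : b₁ = b₂ := by omega
    subst ha; subst hb; rfl
  · rintro ⟨s, a⟩ hmem hne
    dsimp only at hne ⊢
    simp only [Finset.mem_sigma, Finset.mem_range] at hmem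
    have hat : a ≤ t := by
      by_contra hc
      apply hne
      rw [Nat.choose_eq_zero_of_lt (by omega : t < a)]
      push_cast; ring
    have hbs : s - a ≤ d - t := by
      by_contra hc
      apply hne
      rw [Nat.choose_eq_zero_of_lt (by omega : d - t < s - a)]
      push_cast; ring
    refine ⟨⟨a, s - a⟩, ?_, ?_, ?_⟩
    · simp only [Finset.mem_sigma, Finset.mem_range]; omega
    · dsimp only
      intro h0
      apply hne
      have hs : a + (s - a) = s := by omega
      rw [hs] at h0
      linear_combination h0
    · dsimp only
      have hs : a + (s - a) = s := by omega
      rw [hs]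
  · rintro ⟨a, b⟩ h₁ _
    dsimp only
    rw [Nat.add_sub_cancel_left]
    push_cast
    ring

/-- Tanimoto kernel initial error under the uniform distribution on `{0,1}^d`
(encoded as subsets of `Fin d`):
`∑_{x,y ⊆ [d]} |x∩y| / (|x| + |y| − |x∩y|)
  = ∑_{t=0}^{d} ∑_{s=0}^{d} ∑_{a=0}^{s} (a/(s+t−a)) C(d,t) C(t,a) C(d−t, s−a)`. -/
theorem stmt18 (d : ℕ) :
    (∑ x : Finset (Fin d), ∑ y : Finset (Fin d),
        ((x ∩ y).card : ℝ) / ((x.card : ℝ) + (y.card : ℝ) - ((x ∩ y).card : ℝ))) =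
      ∑ t ∈ Finset.range (d + 1), ∑ s ∈ Finset.range (d + 1), ∑ a ∈ Finset.range (s + 1),
        ((a : ℝ) / ((s : ℝ) + (t : ℝ) - (a : ℝ))) * (d.choose t : ℝ) * (t.choose a : ℝ) *
          ((d - t).choose (s - a) : ℝ) := by
  have key : ∀ g : Finset (Fin d) → ℝ,
      ∑ y : Finset (Fin d), g y
        = ∑ t ∈ range (d + 1), ∑ y ∈ powersetCard t (univ : Finset (Fin d)), g y := by
    intro g
    rw [← Finset.powerset_univ, Finset.sum_powerset, Finset.card_univ, Fintype.card_fin]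
  rw [Finset.sum_comm, key]
  refine Finset.sum_congr rfl fun t htmem => ?_
  have htd : t ≤ d := by
    simp only [Finset.mem_range] at htmem; omega
  have hy : ∀ y ∈ powersetCard t (univ : Finset (Fin d)),
      (∑ x : Finset (Fin d),
          ((x ∩ y).card : ℝ) / ((x.card : ℝ) + (y.card : ℝ) - ((x ∩ y).card : ℝ)))
        = ∑ a ∈ range (t + 1), ∑ b ∈ range (d - t + 1),
            (t.choose a : ℝ) * ((d - t).choose b : ℝ)
              * ((a : ℝ) / (((a + b : ℕ) : ℝ) + t - a)) := by
    intro y hyy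
    have hyc : y.card = t := (Finset.mem_powersetCard.mp hyy).2
    have h := tanimoto_decomp d y (fun s a => (a : ℝ) / ((s : ℝ) + (t : ℝ) - (a : ℝ)))
    rw [hyc] at h
    rw [hyc]
    exact h
  rw [Finset.sum_congr rfl hy, Finset.sum_const, Finset.card_powersetCard, Finset.card_univ,
    Fintype.card_fin, nsmul_eq_mul, tanimoto_reindex d t htd, Finset.mul_sum]
  refine Finset.sum_congr rfl fun s _ => ?_
  rw [Finset.mul_sum]
  refine Finset.sum_congr rfl fun a _ => ?_
  ring
end

section
/- Let m be a positive integer, let p : ZMod m → ℝ satisfy p(x) ≠ 0 for all x, and let k : ZMod m → ZMod m → ℝ be any base kernel. Define the difference score s_p(x) = (p(x) − p(x−1)) / p(x) and the Stein kernel k_p(x, x') = s_p(x) k(x,x') s_p(x') − s_p(x) (k(x,x') − k(x, x'+1)) − (k(x,x') − k(x+1, x')) s_p(x') + (k(x,x') − k(x, x'+1) − k(x+1, x') + k(x+1, x'+1)). Then the kernel mean embedding of k_p under p vanishes: for every x' ∈ ZMod m, ∑_{x ∈ ZMod m} p(x) k_p(x, x') = 0. -/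
/-!
The Stein kernel is the discrete Stein operator `A f(x) = s_p(x) f(x) - (f(x) - f(x + 1))`
applied in each argument of `k`. Since `p · s_p = Δp`, the sum `∑ p · A f` equals
`∑ p(x) f(x + 1) - ∑ p(x - 1) f(x)`, which vanishes after shifting the summation index
around the cycle (Stein's identity); apply it in the first argument of the kernel.
-/

open Finset

namespace ZMod

variable {m : ℕ} {R : Type*} [CommRing R]

def steinOp (s f : ZMod m → R) (x : ZMod m) : R :=
  s x * f x - (f x - f (x + 1))

theorem sum_mul_steinOp_eq_zero [NeZero m] {p s : ZMod m → R}
    (hps : ∀ x, p x * s x = p x - p (x - 1)) (f : ZMod m → R) :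
    ∑ x, p x * steinOp s f x = 0 := by
  have hshift : ∑ x, p (x - 1) * f x = ∑ x, p x * f (x + 1) := by
    rw [← Equiv.sum_comp (Equiv.addRight 1)]
    simp only [Equiv.coe_addRight, add_sub_cancel_right]
  have hexpand : ∀ x, p x * steinOp s f x = p x * f (x + 1) - p (x - 1) * f x := by
    intro x
    rw [steinOp, mul_sub, ← mul_assoc, hps]
    ring
  simp only [hexpand, sum_sub_distrib, hshift, sub_self]

end ZMod

open ZMod in
/-- Zero-mean-embedding property of the discrete Stein kernel on the cyclic domain
`ZMod m`: for any base kernel `k` and everywhere-nonzero mass function `p`, the Stein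
kernel `k_p` built from the difference score `s_p(x) = (p(x) − p(x−1))/p(x)` satisfies
`∑_x p(x) k_p(x, x') = 0` for every `x'`. -/
theorem stmt19 (m : ℕ) [NeZero m] (p : ZMod m → ℝ) (hp : ∀ x, p x ≠ 0)
    (k : ZMod m → ZMod m → ℝ)
    (s : ZMod m → ℝ) (hs : ∀ x, s x = (p x - p (x - 1)) / p x)
    (kp : ZMod m → ZMod m → ℝ)
    (hkp : ∀ x x', kp x x' =
      s x * k x x' * s x'
        - s x * (k x x' - k x (x' + 1))
        - (k x x' - k (x + 1) x') * s x'
        + (k x x' - k x (x' + 1) - k (x + 1) x' + k (x + 1) (x' + 1))) :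
    ∀ x' : ZMod m, ∑ x : ZMod m, p x * kp x x' = 0 := by
  intro x'
  have hps : ∀ x, p x * s x = p x - p (x - 1) := fun x => by
    rw [hs, mul_div_cancel₀ _ (hp x)]
  have hkp_steinOp : ∀ x, kp x x' = steinOp s (fun y => steinOp s (k y) x') x := fun x => by
    rw [hkp]
    unfold steinOp
    ring
  simp only [hkp_steinOp]
  exact sum_mul_steinOp_eq_zero hps _
end
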